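/- arXiv:math/0112121 — 5 statements merged into one kernel-verified Lean document; each statement's English description precedes it below -/
import Mathlib

section
/- The matrix R̂ satisfies the braid (quantum Yang–Baxter) equation: (R̂ ⊗ I₂)(I₂ ⊗ R̂)(R̂ ⊗ I₂) = (I₂ ⊗ R̂)(R̂ ⊗ I₂)(I₂ ⊗ R̂) as 8×8 matrices. -/
/-- The R-matrix as a matrix indexed by pairs `(i,j)` with `i, j : Fin 2`. -/
noncomputable def Rhat2 (h h' : ℂ) : Matrix (Fin 2 × Fin 2) (Fin 2 × Fin 2) ℂ :=
  fun p q =>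
    (!![1, -h, h, h * h'; 0, 0, 1, h'; 0, 1, 0, -h'; 0, 0, 0, 1] :
      Matrix (Fin 4) (Fin 4) ℂ) (finProdFinEquiv p) (finProdFinEquiv q)

/-- `R̂ ⊗ I₂` as an 8×8 matrix indexed by `Fin 2 × Fin 2 × Fin 2`. -/
noncomputable def RhatI (h h' : ℂ) :
    Matrix (Fin 2 × Fin 2 × Fin 2) (Fin 2 × Fin 2 × Fin 2) ℂ :=
  fun p q => Rhat2 h h' (p.1, p.2.1) (q.1, q.2.1) * (if p.2.2 = q.2.2 then 1 else 0)

/-- `I₂ ⊗ R̂` as an 8×8 matrix indexed by `Fin 2 × Fin 2 × Fin 2`. -/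
noncomputable def IRhat (h h' : ℂ) :
    Matrix (Fin 2 × Fin 2 × Fin 2) (Fin 2 × Fin 2 × Fin 2) ℂ :=
  fun p q => (if p.1 = q.1 then 1 else 0) * Rhat2 h h' p.2 q.2
namespace Matrix

variable {n α : Type*} [DecidableEq n] [CommSemiring α]

/-- The leg `R₁₂ = R ⊗ 1` of `R` on `V ⊗ V ⊗ V`, with `V ⊗ V ⊗ V` indexed by `n × n × n`. -/
def leg12 (R : Matrix (n × n) (n × n) α) : Matrix (n × n × n) (n × n × n) α :=
  fun p q => R (p.1, p.2.1) (q.1, q.2.1) * if p.2.2 = q.2.2 then 1 else 0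

/-- The leg `R₂₃ = 1 ⊗ R` of `R` on `V ⊗ V ⊗ V`. -/
def leg23 (R : Matrix (n × n) (n × n) α) : Matrix (n × n × n) (n × n × n) α :=
  fun p q => (if p.1 = q.1 then 1 else 0) * R p.2 q.2

variable [Fintype n] (R : Matrix (n × n) (n × n) α)

lemma leg12_mul_apply (M : Matrix (n × n × n) (n × n × n) α) (a b c : n) (q : n × n × n) :
    (leg12 R * M) (a, b, c) q = ∑ u, ∑ v, R (a, b) (u, v) * M (u, v, c) q := by
  simp [leg12, mul_apply, Fintype.sum_prod_type]

lemma leg23_mul_apply (M : Matrix (n × n × n) (n × n × n) α) (a b c : n) (q : n × n × n) :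
    (leg23 R * M) (a, b, c) q = ∑ u, ∑ v, R (b, c) (u, v) * M (a, u, v) q := by
  simp [leg23, mul_apply, Fintype.sum_prod_type]

lemma leg12_mul_leg23_mul_leg12_apply (a b c a' b' c' : n) :
    (leg12 R * leg23 R * leg12 R) (a, b, c) (a', b', c') =
      ∑ u, ∑ v, ∑ w, R (a, b) (u, v) * R (v, c) (w, c') * R (u, w) (a', b') := by
  simp [leg12_mul_apply, leg23_mul_apply, leg12, Finset.mul_sum, mul_assoc]

lemma leg23_mul_leg12_mul_leg23_apply (a b c a' b' c' : n) :
    (leg23 R * leg12 R * leg23 R) (a, b, c) (a', b', c') =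
      ∑ u, ∑ v, ∑ w, R (b, c) (u, v) * R (a, u) (a', w) * R (w, v) (b', c') := by
  simp [leg12_mul_apply, leg23_mul_apply, leg23, Finset.mul_sum, mul_assoc]

lemma leg12_mul_leg23_mul_leg12_eq
    (hR : ∀ a b c a' b' c' : n,
      ∑ u, ∑ v, ∑ w, R (a, b) (u, v) * R (v, c) (w, c') * R (u, w) (a', b') =
        ∑ u, ∑ v, ∑ w, R (b, c) (u, v) * R (a, u) (a', w) * R (w, v) (b', c')) :
    leg12 R * leg23 R * leg12 R = leg23 R * leg12 R * leg23 R := by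
  ext ⟨a, b, c⟩ ⟨a', b', c'⟩
  rw [leg12_mul_leg23_mul_leg12_apply, leg23_mul_leg12_mul_leg23_apply, hR]

end Matrix

theorem rhat_yang_baxter (h h' : ℂ) :
    RhatI h h' * IRhat h h' * RhatI h h' = IRhat h h' * RhatI h h' * IRhat h h' := by
  -- `RhatI h h'` and `IRhat h h'` are `leg12` and `leg23` of `Rhat2 h h'` by definition.
  refine Matrix.leg12_mul_leg23_mul_leg12_eq (Rhat2 h h') fun a b c a' b' c' => ?_
  simp only [Fin.sum_univ_two]
  fin_cases a <;> fin_cases b <;> fin_cases c <;> fin_cases a' <;> fin_cases b' <;> fin_cases c' <;>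
    simp [Rhat2, finProdFinEquiv] <;> ring
end

section
/- The h-exterior plane Λ is a 4-dimensional ℂ-vector space with basis {1, θ, φ, θφ}; in particular every element of Λ can be written uniquely as a·1 + b·θ + c·φ + d·θφ with a, b, c, d ∈ ℂ. -/
open FreeAlgebra in
/-- The defining relations of the h-exterior plane. -/
inductive ExtRel (h : ℂ) : FreeAlgebra ℂ (Fin 2) → FreeAlgebra ℂ (Fin 2) → Prop
  | thetaSq : ExtRel h (ι ℂ 0 * ι ℂ 0) (algebraMap ℂ _ h * (ι ℂ 0 * ι ℂ 1))
  | phiSq : ExtRel h (ι ℂ 1 * ι ℂ 1) 0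
  | anticomm : ExtRel h (ι ℂ 0 * ι ℂ 1 + ι ℂ 1 * ι ℂ 0) 0

noncomputable def ExtPlane (h : ℂ) := RingQuot (ExtRel h)

noncomputable instance (h : ℂ) : Ring (ExtPlane h) := by unfold ExtPlane; infer_instance
noncomputable instance (h : ℂ) : Algebra ℂ (ExtPlane h) := by unfold ExtPlane; infer_instance

noncomputable def θgen (h : ℂ) : ExtPlane h :=
  RingQuot.mkAlgHom ℂ (ExtRel h) (FreeAlgebra.ι ℂ 0)

noncomputable def φgen (h : ℂ) : ExtPlane h :=
  RingQuot.mkAlgHom ℂ (ExtRel h) (FreeAlgebra.ι ℂ 1)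

noncomputable section ExtAux

/-- Matrix of left multiplication by θ on the basis 1, θ, φ, θφ. -/
def Tθ (h : ℂ) : Matrix (Fin 4) (Fin 4) ℂ := !![0,0,0,0; 1,0,0,0; 0,0,0,0; 0,h,1,0]

/-- Matrix of left multiplication by φ on the basis 1, θ, φ, θφ. -/
def Tφ : Matrix (Fin 4) (Fin 4) ℂ := !![0,0,0,0; 0,0,0,0; 1,0,0,0; 0,-1,0,0]

def fAux (h : ℂ) : FreeAlgebra ℂ (Fin 2) →ₐ[ℂ] Matrix (Fin 4) (Fin 4) ℂ :=
  FreeAlgebra.lift ℂ ![Tθ h, Tφ]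

lemma fAux_rel (h : ℂ) : ∀ ⦃x y⦄, ExtRel h x y → fAux h x = fAux h y := by
  intro x y r
  cases r <;>
  · simp only [fAux, map_mul, map_add, map_zero, FreeAlgebra.lift_ι_apply, AlgHom.commutes,
      Matrix.cons_val_zero, Matrix.cons_val_one, Matrix.head_cons]
    ext i j
    fin_cases i <;> fin_cases j <;>
      simp [Tθ, Tφ, Matrix.mul_apply, Fin.sum_univ_four, Matrix.algebraMap_matrix_apply]
    all_goals rfl

def fRep (h : ℂ) : ExtPlane h →ₐ[ℂ] Matrix (Fin 4) (Fin 4) ℂ :=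
  RingQuot.liftAlgHom ℂ ⟨fAux h, fAux_rel h⟩

lemma fRep_mk (h : ℂ) (x : FreeAlgebra ℂ (Fin 2)) :
    fRep h (RingQuot.mkAlgHom ℂ (ExtRel h) x) = fAux h x := by
  unfold fRep
  exact RingQuot.liftAlgHom_mkAlgHom_apply ℂ (fAux h) (fAux_rel h) x

lemma rel_θθ (h : ℂ) : θgen h * θgen h = h • (θgen h * φgen h) := by
  have := RingQuot.mkAlgHom_rel ℂ (ExtRel.thetaSq (h := h))
  simp [θgen, φgen, map_mul, AlgHom.commutes, Algebra.smul_def] at this ⊢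
  exact this

lemma rel_φφ (h : ℂ) : φgen h * φgen h = 0 := by
  have := RingQuot.mkAlgHom_rel ℂ (ExtRel.phiSq (h := h))
  simp [θgen, φgen, map_mul] at this ⊢
  exact this

lemma rel_φθ (h : ℂ) : φgen h * θgen h = -(θgen h * φgen h) := by
  have := RingQuot.mkAlgHom_rel ℂ (ExtRel.anticomm (h := h))
  simp only [map_add, map_mul, map_zero] at this
  rw [eq_neg_iff_add_eq_zero, add_comm]
  simp [θgen, φgen] at this ⊢
  exact this

lemma rel_θ_θφ (h : ℂ) : θgen h * (θgen h * φgen h) = 0 := by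
  rw [← mul_assoc, rel_θθ, smul_mul_assoc, mul_assoc, rel_φφ, mul_zero, smul_zero]

lemma rel_φ_θφ (h : ℂ) : φgen h * (θgen h * φgen h) = 0 := by
  rw [← mul_assoc, rel_φθ, neg_mul, mul_assoc, rel_φφ, mul_zero, neg_zero]

lemma rel_θφ_θ (h : ℂ) : (θgen h * φgen h) * θgen h = 0 := by
  rw [mul_assoc, rel_φθ, mul_neg, rel_θ_θφ, neg_zero]

lemma rel_θφ_φ (h : ℂ) : (θgen h * φgen h) * φgen h = 0 := by
  rw [mul_assoc, rel_φφ, mul_zero]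

lemma rel_θφ_θφ (h : ℂ) : (θgen h * φgen h) * (θgen h * φgen h) = 0 := by
  rw [← mul_assoc, rel_θφ_θ, zero_mul]

def vv (h : ℂ) : Fin 4 → ExtPlane h := ![1, θgen h, φgen h, θgen h * φgen h]

lemma mem_vv (h : ℂ) (i : Fin 4) : vv h i ∈ Submodule.span ℂ (Set.range (vv h)) :=
  Submodule.subset_span ⟨i, rfl⟩

lemma span_mul (h : ℂ) {x y : ExtPlane h}
    (hx : x ∈ Submodule.span ℂ (Set.range (vv h)))
    (hy : y ∈ Submodule.span ℂ (Set.range (vv h))) :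
    x * y ∈ Submodule.span ℂ (Set.range (vv h)) := by
  set S := Submodule.span ℂ (Set.range (vv h)) with hS
  induction hy using Submodule.span_induction with
  | mem y hy' =>
    induction hx using Submodule.span_induction with
    | mem x hx' =>
      obtain ⟨i, rfl⟩ := hx'
      obtain ⟨j, rfl⟩ := hy'
      have m0 : (1 : ExtPlane h) ∈ S := mem_vv h 0
      have m1 : θgen h ∈ S := mem_vv h 1
      have m2 : φgen h ∈ S := mem_vv h 2
      have m3 : θgen h * φgen h ∈ S := mem_vv h 3
      fin_cases i <;> fin_cases j
      · show (1 : ExtPlane h) * 1 ∈ S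
        rw [one_mul]; exact m0
      · show (1 : ExtPlane h) * θgen h ∈ S
        rw [one_mul]; exact m1
      · show (1 : ExtPlane h) * φgen h ∈ S
        rw [one_mul]; exact m2
      · show (1 : ExtPlane h) * (θgen h * φgen h) ∈ S
        rw [one_mul]; exact m3
      · show θgen h * 1 ∈ S
        rw [mul_one]; exact m1
      · show θgen h * θgen h ∈ S
        rw [rel_θθ]; exact S.smul_mem _ m3
      · show θgen h * φgen h ∈ S
        exact m3
      · show θgen h * (θgen h * φgen h) ∈ S
        rw [rel_θ_θφ]; exact S.zero_mem
      · show φgen h * 1 ∈ S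
        rw [mul_one]; exact m2
      · show φgen h * θgen h ∈ S
        rw [rel_φθ]; exact S.neg_mem m3
      · show φgen h * φgen h ∈ S
        rw [rel_φφ]; exact S.zero_mem
      · show φgen h * (θgen h * φgen h) ∈ S
        rw [rel_φ_θφ]; exact S.zero_mem
      · show θgen h * φgen h * 1 ∈ S
        rw [mul_one]; exact m3
      · show θgen h * φgen h * θgen h ∈ S
        rw [rel_θφ_θ]; exact S.zero_mem
      · show θgen h * φgen h * φgen h ∈ S
        rw [rel_θφ_φ]; exact S.zero_mem
      · show θgen h * φgen h * (θgen h * φgen h) ∈ S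
        rw [rel_θφ_θφ]; exact S.zero_mem
    | zero => simpa using S.zero_mem
    | add a b _ _ ha hb => simpa [add_mul] using S.add_mem ha hb
    | smul c a _ ha => simpa [smul_mul_assoc] using S.smul_mem c ha
  | zero => simpa using S.zero_mem
  | add a b _ _ ha hb => simpa [mul_add] using S.add_mem ha hb
  | smul c a _ ha => simpa [mul_smul_comm] using S.smul_mem c ha

lemma span_top (h : ℂ) (z : ExtPlane h) : z ∈ Submodule.span ℂ (Set.range (vv h)) := by
  set S := Submodule.span ℂ (Set.range (vv h)) with hS
  obtain ⟨x, rfl⟩ := RingQuot.mkAlgHom_surjective ℂ (ExtRel h) z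
  induction x using FreeAlgebra.induction with
  | grade0 r =>
    rw [AlgHom.commutes]
    have hm := S.smul_mem r (mem_vv h 0)
    simp [vv, Algebra.algebraMap_eq_smul_one] at hm ⊢
    exact hm
  | grade1 i =>
    fin_cases i
    · exact mem_vv h 1
    · exact mem_vv h 2
  | mul a b ha hb => rw [map_mul]; exact span_mul h ha hb
  | add a b ha hb => rw [map_add]; exact S.add_mem ha hb

lemma fRep_vv (h : ℂ) :
    (fRep h).toLinearMap ∘ vv h = ![1, Tθ h, Tφ, Tθ h * Tφ] := by
  funext i
  fin_cases i <;>
    simp [vv, θgen, φgen, fRep_mk, fAux, FreeAlgebra.lift_ι_apply]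
  have hm := map_mul (RingQuot.mkAlgHom ℂ (ExtRel h)) (FreeAlgebra.ι ℂ 0) (FreeAlgebra.ι ℂ 1)
  exact (congrArg (fRep h) hm.symm).trans (by rw [fRep_mk]; simp [fAux])

lemma li_vv (h : ℂ) : LinearIndependent ℂ (vv h) := by
  apply LinearIndependent.of_comp (fRep h).toLinearMap
  rw [fRep_vv]
  rw [Fintype.linearIndependent_iff]
  intro g hg
  simp only [Fin.sum_univ_four, Matrix.cons_val_zero, Matrix.cons_val_one, Matrix.head_cons,
    Matrix.cons_val_two, Matrix.tail_cons, Matrix.cons_val_three, Matrix.cons_val_fin_one] at hg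
  have e : ∀ i j : Fin 4,
      (g 0 • (1 : Matrix (Fin 4) (Fin 4) ℂ) + g 1 • Tθ h + g 2 • Tφ + g 3 • (Tθ h * Tφ)) i j
        = 0 := by
    rw [hg]; intro i j; rfl
  intro i
  fin_cases i
  · simpa [Tθ, Tφ, Matrix.mul_apply, Fin.sum_univ_four, Matrix.one_apply, Matrix.vecHead, Matrix.vecTail] using e 0 0
  · simpa [Tθ, Tφ, Matrix.mul_apply, Fin.sum_univ_four, Matrix.one_apply, Matrix.vecHead, Matrix.vecTail] using e 1 0
  · simpa [Tθ, Tφ, Matrix.mul_apply, Fin.sum_univ_four, Matrix.one_apply, Matrix.vecHead, Matrix.vecTail] using e 2 0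
  · simpa [Tθ, Tφ, Matrix.mul_apply, Fin.sum_univ_four, Matrix.one_apply, Matrix.vecHead, Matrix.vecTail] using e 3 0

end ExtAux

theorem ext_plane_basis (h : ℂ) :
    ∃ b : Module.Basis (Fin 4) ℂ (ExtPlane h),
      b 0 = 1 ∧ b 1 = θgen h ∧ b 2 = φgen h ∧ b 3 = θgen h * φgen h := by
  refine ⟨Module.Basis.mk (li_vv h) (fun z _ => span_top h z), ?_, ?_, ?_, ?_⟩ <;>
    simp [vv, Module.Basis.mk_apply]
end

section
/- Suppose h ∈ ℂ is purely imaginary (so that its complex conjugate is −h). Then the conjugate-linear map on the h-exterior plane Λ determined by θ ↦ θ + hφ, φ ↦ φ, extended as an anti-homomorphism ((ab)⁺ = b⁺a⁺), is well defined (preserves the defining relations) and is an involution: applying it twice gives the identity. -/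
namespace ExtAux
open MulOpposite
noncomputable def Fmap (h : ℂ) : FreeAlgebra ℂ (Fin 2) →+* (ExtPlane h)ᵐᵒᵖ :=
  (MonoidAlgebra.liftNCRingHom ((algebraMap ℂ (ExtPlane h)ᵐᵒᵖ).comp (starRingEnd ℂ))
    (FreeMonoid.lift (fun i => op (![θgen h + h • φgen h, φgen h] i)))
    (fun c _ => (Algebra.commutes (starRingEnd ℂ c) _))).comp
    (FreeAlgebra.equivMonoidAlgebraFreeMonoid (R := ℂ) (X := Fin 2)).toAlgHom.toRingHom
lemma F0 (h : ℂ) : Fmap h (FreeAlgebra.ι ℂ 0) = op (θgen h + h • φgen h) := by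
  simp [Fmap, FreeAlgebra.equivMonoidAlgebraFreeMonoid, MonoidAlgebra.liftNCRingHom]
lemma F1 (h : ℂ) : Fmap h (FreeAlgebra.ι ℂ 1) = op (φgen h) := by
  simp [Fmap, FreeAlgebra.equivMonoidAlgebraFreeMonoid, MonoidAlgebra.liftNCRingHom]
lemma Falg (h c : ℂ) :
    Fmap h (algebraMap ℂ _ c) = op (algebraMap ℂ (ExtPlane h) (starRingEnd ℂ c)) := by
  simp [Fmap, MonoidAlgebra.liftNCRingHom]
lemma relθ (h : ℂ) : θgen h * θgen h = h • (θgen h * φgen h) := by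
  have := RingQuot.mkAlgHom_rel ℂ (ExtRel.thetaSq (h := h))
  simp [θgen, φgen, map_mul, Algebra.smul_def] at this ⊢; exact this
lemma relφ (h : ℂ) : φgen h * φgen h = 0 := by
  have := RingQuot.mkAlgHom_rel ℂ (ExtRel.phiSq (h := h))
  simp [φgen, map_mul] at this ⊢; exact this
lemma relA (h : ℂ) : θgen h * φgen h + φgen h * θgen h = 0 := by
  have := RingQuot.mkAlgHom_rel ℂ (ExtRel.anticomm (h := h))
  simp [θgen, φgen, map_mul, map_add] at this ⊢; exact this
lemma Fwd (h : ℂ) (hIm : starRingEnd ℂ h = -h) :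
    ∀ ⦃x y⦄, ExtRel h x y → Fmap h x = Fmap h y := by
  intro x y r
  have hφθ : φgen h * θgen h = -(θgen h * φgen h) :=
    eq_neg_of_add_eq_zero_right (relA h)
  cases r with
  | thetaSq =>
      rw [map_mul, map_mul, map_mul, F0, F1, Falg, hIm]
      apply unop_injective
      simp only [unop_mul, unop_op, unop_add]
      set t := θgen h; set p := φgen h
      have hφθ' : p * t = -(t * p) := hφθ
      rw [show p * (t + h • p) * (algebraMap ℂ (ExtPlane h)) (-h)
            = (-h) • (p * (t + h • p)) by rw [← Algebra.commutes, ← Algebra.smul_def]]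
      simp only [mul_add, add_mul, relθ h, mul_smul_comm, smul_mul_assoc, smul_smul,
        relφ h, smul_zero, hφθ']
      have e1 : t * t = h • (t * p) := relθ h
      have e2 : p * p = 0 := relφ h
      have e3 : (-h) • (-(t * p)) = h • (t * p) := by
        rw [Algebra.smul_def, Algebra.smul_def, map_neg, neg_mul_neg]
      have e4 : h • -(t * p) = -(h • (t * p)) := by
        rw [Algebra.smul_def, Algebra.smul_def, mul_neg]
      have e5 : h • (0 : ExtPlane h) = 0 := by
        rw [Algebra.smul_def, mul_zero]
      rw [e1, e2, e5, add_zero, add_zero, e3, e4]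
      abel
  | phiSq =>
      rw [map_mul, F1]
      apply unop_injective
      simp only [unop_mul, unop_op, map_zero, unop_zero]
      exact relφ h
  | anticomm =>
      rw [map_add, map_mul, map_mul, F0, F1]
      apply unop_injective
      simp only [unop_mul, unop_op, unop_add, map_zero, unop_zero]
      set t := θgen h; set p := φgen h
      rw [mul_add, add_mul, mul_smul_comm, smul_mul_assoc, relφ h, smul_zero,
        add_zero, add_zero, add_comm]
      exact relA h
end ExtAux


open ExtAux MulOpposite in
theorem ext_plane_involution (h : ℂ) (hIm : starRingEnd ℂ h = -h) :
    ∃ σ : ExtPlane h → ExtPlane h,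
      (∀ a b, σ (a + b) = σ a + σ b) ∧
      (∀ (c : ℂ) (a : ExtPlane h), σ (c • a) = (starRingEnd ℂ c) • σ a) ∧
      (∀ a b, σ (a * b) = σ b * σ a) ∧
      σ 1 = 1 ∧
      σ (θgen h) = θgen h + h • φgen h ∧
      σ (φgen h) = φgen h ∧
      (∀ a, σ (σ a) = a) := by
  set σ' : ExtPlane h →+* (ExtPlane h)ᵐᵒᵖ := RingQuot.lift ⟨Fmap h, Fwd h hIm⟩ with hσ'def
  have hmk : ∀ x, σ' (RingQuot.mkRingHom (ExtRel h) x) = Fmap h x := fun x =>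
    RingQuot.lift_mkRingHom_apply _ _ x
  have hmk' : ∀ x : FreeAlgebra ℂ (Fin 2),
      (RingQuot.mkAlgHom ℂ (ExtRel h) x : ExtPlane h) = RingQuot.mkRingHom (ExtRel h) x := by
    intro x; rw [← RingQuot.mkAlgHom_coe ℂ (ExtRel h)]; rfl
  have hac : ∀ c : ℂ, RingQuot.mkRingHom (ExtRel h) (algebraMap ℂ _ c)
      = algebraMap ℂ (ExtPlane h) c := fun c => by
    rw [← hmk']; exact (RingQuot.mkAlgHom ℂ (ExtRel h)).commutes c
  have halg : ∀ c : ℂ, σ' (algebraMap ℂ (ExtPlane h) c)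
      = op (algebraMap ℂ (ExtPlane h) (starRingEnd ℂ c)) := by
    intro c; rw [← hac, hmk, Falg]
  have hθ : σ' (θgen h) = op (θgen h + h • φgen h) := by
    conv_lhs => rw [θgen, hmk', hmk, F0]
  have hφ : σ' (φgen h) = op (φgen h) := by
    conv_lhs => rw [φgen, hmk', hmk, F1]
  have hsmul : ∀ (c : ℂ) (a : ExtPlane h),
      (σ' (c • a)).unop = (starRingEnd ℂ c) • (σ' a).unop := by
    intro c a
    rw [Algebra.smul_def, map_mul, halg, unop_mul, unop_op, ← Algebra.commutes,
      ← Algebra.smul_def]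
  refine ⟨fun a => (σ' a).unop, fun a b => by simp, hsmul, fun a b => by simp,
    by simp, by simp [hθ], by simp [hφ], ?_⟩
  intro a
  obtain ⟨x, rfl⟩ := RingQuot.mkRingHom_surjective (ExtRel h) a
  induction x using FreeAlgebra.induction with
  | grade0 c => simp only [hac, halg, unop_op, Complex.conj_conj]
  | grade1 i =>
      fin_cases i
      · show (σ' ((σ' (RingQuot.mkRingHom (ExtRel h) (FreeAlgebra.ι ℂ 0))).unop)).unop
            = RingQuot.mkRingHom (ExtRel h) (FreeAlgebra.ι ℂ 0)
        rw [← hmk' , ← θgen, hθ, unop_op, map_add, unop_add, hθ, unop_op]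
        have := hsmul h (φgen h)
        have e : (-h) • φgen h = -(h • φgen h) := by
          rw [Algebra.smul_def, Algebra.smul_def, map_neg, neg_mul]
        rw [this, hφ, unop_op, hIm, e]
        abel
      · show (σ' ((σ' (RingQuot.mkRingHom (ExtRel h) (FreeAlgebra.ι ℂ 1))).unop)).unop
            = RingQuot.mkRingHom (ExtRel h) (FreeAlgebra.ι ℂ 1)
        rw [← hmk', ← φgen, hφ, unop_op, hφ, unop_op]
  | mul a b ha hb =>
      beta_reduce at ha hb ⊢
      have key : ∀ x y : ExtPlane h, (σ' (σ' x).unop).unop = x → (σ' (σ' y).unop).unop = y →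
          (σ' (σ' (x * y)).unop).unop = x * y := by
        intro x y ha hb
        simp only [map_mul, unop_mul]
        rw [ha, hb]
      rw [map_mul (RingQuot.mkRingHom (ExtRel h))]
      exact key _ _ ha hb
  | add a b ha hb =>
      beta_reduce at ha hb ⊢
      have key : ∀ x y : ExtPlane h, (σ' (σ' x).unop).unop = x → (σ' (σ' y).unop).unop = y →
          (σ' (σ' (x + y)).unop).unop = x + y := by
        intro x y ha hb
        simp only [map_add, unop_add]
        rw [ha, hb]
      rw [map_add (RingQuot.mkRingHom (ExtRel h))]
      exact key _ _ ha hb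
end

section
/- In the algebra B generated by θ, φ, ∂θ, ∂φ with the relations (19), (22), (23) of the two-parameter calculus, the hermitian operators θ̂ = θ + (h/2)φ, φ̂ = φ, π̂_θ = ∂θ, π̂_φ = ∂φ + (h'/2)∂θ satisfy π̂_φ θ̂ = −θ̂ π̂_φ − h θ̂ π̂_θ − h' φ̂ π̂_φ + (1/2)(h² + h'²) φ̂ π̂_θ + (1/2)(h + h')·1. -/
theorem pi_phi_theta_hat_relation_general (B : Type*) [Ring B] [Algebra ℂ B] (h h' : ℂ)
    (θ φ Dθ Dφ : B)
    (c1 : Dθ * θ = 1 - θ * Dθ + h • (φ * Dθ))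
    (c2 : Dθ * φ = -(φ * Dθ))
    (c3 : Dφ * θ = -(θ * Dφ) - h • (θ * Dθ) - h' • (φ * Dφ) - (h * h') • (φ * Dθ))
    (c4 : Dφ * φ = 1 - φ * Dφ + h' • (φ * Dθ)) :
    let θh : B := θ + (h / 2) • φ
    let φh : B := φ
    let πθ : B := Dθ
    let πφ : B := Dφ + (h' / 2) • Dθ
    πφ * θh = -(θh * πφ) - h • (θh * πθ) - h' • (φh * πφ)
      + ((1 / 2) * (h ^ 2 + h' ^ 2)) • (φh * πθ) + ((1 / 2) * (h + h')) • (1 : B) := by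
  intro θh φh πθ πφ
  simp only [θh, φh, πθ, πφ, add_mul, mul_add, smul_mul_assoc, mul_smul_comm, c1, c2, c3, c4]
  module

theorem pi_phi_theta_hat_relation (B : Type*) [Ring B] [Algebra ℂ B] (h h' : ℂ)
    (θ φ Dθ Dφ : B)
    (q1 : θ * θ = h • (θ * φ)) (q2 : φ * φ = 0) (q3 : θ * φ + φ * θ = 0)
    (d1 : Dθ * Dθ = 0) (d2 : Dφ * Dφ = h' • (Dθ * Dφ))
    (d3 : Dθ * Dφ + Dφ * Dθ = 0)
    (c1 : Dθ * θ = 1 - θ * Dθ + h • (φ * Dθ))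
    (c2 : Dθ * φ = -(φ * Dθ))
    (c3 : Dφ * θ = -(θ * Dφ) - h • (θ * Dθ) - h' • (φ * Dφ) - (h * h') • (φ * Dθ))
    (c4 : Dφ * φ = 1 - φ * Dφ + h' • (φ * Dθ)) :
    let θh : B := θ + (h / 2) • φ
    let φh : B := φ
    let πθ : B := Dθ
    let πφ : B := Dφ + (h' / 2) • Dθ
    πφ * θh = -(θh * πφ) - h • (θh * πθ) - h' • (φh * πφ)
      + ((1 / 2) * (h ^ 2 + h' ^ 2)) • (φh * πθ) + ((1 / 2) * (h + h')) • (1 : B) :=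
  pi_phi_theta_hat_relation_general B h h' θ φ Dθ Dφ c1 c2 c3 c4
end

section
/- In the algebra B of the two-parameter calculus, the elements π̂_θ = ∂θ, π̂_φ = ∂φ + (h'/2)∂θ and θ̂ = θ + (h/2)φ, φ̂ = φ also satisfy π̂_θ θ̂ = 1 − θ̂ π̂_θ + h φ̂ π̂_θ, π̂_θ φ̂ = −φ̂ π̂_θ, and π̂_φ φ̂ = 1 − φ̂ π̂_φ + h' φ̂ π̂_θ. -/
theorem pi_hat_remaining_relations_general (B : Type*) [Ring B] [Algebra ℂ B] (h h' : ℂ)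
    (θ φ Dθ Dφ : B)
    (c1 : Dθ * θ = 1 - θ * Dθ + h • (φ * Dθ))
    (c2 : Dθ * φ = -(φ * Dθ))
    (c4 : Dφ * φ = 1 - φ * Dφ + h' • (φ * Dθ)) :
    let θh : B := θ + (h / 2) • φ
    let φh : B := φ
    let πθ : B := Dθ
    let πφ : B := Dφ + (h' / 2) • Dθ
    πθ * θh = 1 - θh * πθ + h • (φh * πθ) ∧
    πθ * φh = -(φh * πθ) ∧
    πφ * φh = 1 - φh * πφ + h' • (φh * πθ) := by
  refine ⟨?_, ?_, ?_⟩ <;>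
    simp only [mul_add, add_mul, smul_mul_assoc, mul_smul_comm, c1, c2, c4] <;> module

theorem pi_hat_remaining_relations (B : Type*) [Ring B] [Algebra ℂ B] (h h' : ℂ)
    (θ φ Dθ Dφ : B)
    (q1 : θ * θ = h • (θ * φ)) (q2 : φ * φ = 0) (q3 : θ * φ + φ * θ = 0)
    (d1 : Dθ * Dθ = 0) (d2 : Dφ * Dφ = h' • (Dθ * Dφ))
    (d3 : Dθ * Dφ + Dφ * Dθ = 0)
    (c1 : Dθ * θ = 1 - θ * Dθ + h • (φ * Dθ))
    (c2 : Dθ * φ = -(φ * Dθ))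
    (c3 : Dφ * θ = -(θ * Dφ) - h • (θ * Dθ) - h' • (φ * Dφ) - (h * h') • (φ * Dθ))
    (c4 : Dφ * φ = 1 - φ * Dφ + h' • (φ * Dθ)) :
    let θh : B := θ + (h / 2) • φ
    let φh : B := φ
    let πθ : B := Dθ
    let πφ : B := Dφ + (h' / 2) • Dθ
    πθ * θh = 1 - θh * πθ + h • (φh * πθ) ∧
    πθ * φh = -(φh * πθ) ∧
    πφ * φh = 1 - φh * πφ + h' • (φh * πθ) :=
  pi_hat_remaining_relations_general B h h' θ φ Dθ Dφ c1 c2 c4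
end
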